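/- Every characteristic vector K on G_n satisfying v·v + 2 ≤ K·v ≤ -v·v for all v and whose first four pairings are (1, 0, -1, -3) but which has some nonzero pairing among positions 5,...,n+3 admits a bad full path; hence the only such basic vector is (1,0,-1,-3,0,...,0). -/

import Mathlib

/-!
A legal move from a vector that supports a good full path leads to a vector that again supports
one: if the next move `u` of the good path is the move itself we drop it, if `u` is not adjacent
to the move the two commute, and if it is adjacent the move makes its vertex bad, which no later
legal move can repair. Hence a single bad full path rules out every good one.

Pairings on the `-2` chain lie in `{0, 2}`. Moving along the chain from the first vertex with
pairing `2` transports that `2` to vertex 5, leaving `(1, 0, -1, -3, 2)` on the first five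
vertices. These span a copy of `G_2`, on which the vertex sequence `1,2,1,3,1,2,1,5,4,1,2,1` is
a bad full path, and paths on a full subgraph are paths on the whole graph.
-/

/-- Weight of vertex `i` (0-indexed) in the plumbing graph `G n` for `Σ(2,3,6n+1)`. -/
def wt (i : ℕ) : ℤ :=
  if i = 0 then -1 else if i = 1 then -2 else if i = 2 then -3 else if i = 3 then -7 else -2

/-- Adjacency: vertex 0 joined to 1,2,3; vertices 3,4,…,n+2 form a chain. -/
def adjG (i j : ℕ) : Prop :=
  (i = 0 ∧ (j = 1 ∨ j = 2 ∨ j = 3)) ∨ (j = 0 ∧ (i = 1 ∨ i = 2 ∨ i = 3)) ∨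
    (3 ≤ i ∧ 3 ≤ j ∧ (i + 1 = j ∨ j + 1 = i))

instance (i j : ℕ) : Decidable (adjG i j) := by unfold adjG; infer_instance

/-- The intersection matrix of the plumbing graph `G n` (n+3 vertices). -/
def MG (n : ℕ) : Matrix (Fin (n + 3)) (Fin (n + 3)) ℤ :=
  fun i j => if i = j then wt i.val else if adjG i.val j.val then 1 else 0

/-- Adding `2 PD[v]` to a characteristic vector recorded by its pairing sequence. -/
def applyMove {V : Type*} (M : Matrix V V ℤ) (K : V → ℤ) (v : V) : V → ℤ :=
  fun i => K i + 2 * M v i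

/-- Result of performing the moves in the list `l` in order. -/
def pathEnd {V : Type*} (M : Matrix V V ℤ) (K : V → ℤ) (l : List V) : V → ℤ :=
  l.foldl (applyMove M) K

/-- Each move in the list is performed at a vertex `v` with `K·v + v·v = 0`. -/
def PathLegal {V : Type*} (M : Matrix V V ℤ) : (V → ℤ) → List V → Prop
  | _, [] => True
  | K, v :: l => K v + M v v = 0 ∧ PathLegal M (applyMove M K v) l

/-- `v·v + 2 ≤ K·v ≤ -v·v` for every vertex `v`. -/
def InBounds {V : Type*} (M : Matrix V V ℤ) (K : V → ℤ) : Prop :=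
  ∀ v, M v v + 2 ≤ K v ∧ K v ≤ -(M v v)

/-- `K` supports a good full path: a legal sequence of moves ending at `K'` with
`-K'` satisfying the inequalities. -/
def HasGoodPath {V : Type*} (M : Matrix V V ℤ) (K : V → ℤ) : Prop :=
  ∃ l, PathLegal M K l ∧ InBounds M (fun v => -(pathEnd M K l v))

/-- A bad full path: legal moves reaching a vector with `K'·v + v·v > 0` for some `v`. -/
def BadFullPath {V : Type*} (M : Matrix V V ℤ) (K : V → ℤ) (l : List V) : Prop :=
  PathLegal M K l ∧ ∃ v, pathEnd M K l v + M v v > 0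

/-- The basic vectors `K_j`, `1 ≤ j ≤ n+1`, recorded as pairing sequences. -/
def Kv (n j : ℕ) : Fin (n + 3) → ℤ := fun i =>
  if i.val = 0 then 1 else if i.val = 1 then 0 else if i.val = 2 then -1
  else if i.val = 3 then (if j = 2 then -3 else -5)
  else if 3 ≤ j ∧ i.val = j + 1 then 2 else 0

section Paths

variable {V : Type*} {M : Matrix V V ℤ}

lemma pathEnd_cons (K : V → ℤ) (v : V) (l : List V) :
    pathEnd M K (v :: l) = pathEnd M (applyMove M K v) l := rfl

lemma pathEnd_append (K : V → ℤ) (l₁ l₂ : List V) :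
    pathEnd M K (l₁ ++ l₂) = pathEnd M (pathEnd M K l₁) l₂ :=
  List.foldl_append ..

lemma PathLegal.append {K : V → ℤ} {l₁ l₂ : List V} (h₁ : PathLegal M K l₁)
    (h₂ : PathLegal M (pathEnd M K l₁) l₂) : PathLegal M K (l₁ ++ l₂) := by
  induction l₁ generalizing K with
  | nil => exact h₂
  | cons v l ih => exact ⟨h₁.1, ih h₁.2 h₂⟩

lemma PathLegal.badFullPath_append {K : V → ℤ} {l₁ l₂ : List V} (h₁ : PathLegal M K l₁)
    (h₂ : BadFullPath M (pathEnd M K l₁) l₂) : BadFullPath M K (l₁ ++ l₂) := by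
  obtain ⟨hl₂, v, hv⟩ := h₂
  exact ⟨h₁.append hl₂, v, by rwa [pathEnd_append]⟩

instance PathLegal.instDecidable [DecidableEq V] :
    ∀ (K : V → ℤ) (l : List V), Decidable (PathLegal M K l)
  | _, [] => isTrue trivial
  | K, v :: l =>
    haveI := PathLegal.instDecidable (applyMove M K v) l
    inferInstanceAs (Decidable (_ ∧ _))

/-- A move at `w` itself is illegal once `K·w + w·w > 0`, and a move elsewhere cannot
decrease `K·w`. -/
lemma PathLegal.pathEnd_add_diag_pos (hoff : ∀ u w : V, u ≠ w → 0 ≤ M u w) {K : V → ℤ}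
    {l : List V} (hl : PathLegal M K l) {w : V} (hw : 0 < K w + M w w) :
    0 < pathEnd M K l w + M w w := by
  induction l generalizing K with
  | nil => exact hw
  | cons v l ih =>
    obtain ⟨hv, hl⟩ := hl
    have hvw : v ≠ w := by rintro rfl; omega
    have := hoff v w hvw
    exact ih hl (by simp only [applyMove]; omega)

lemma hasGoodPath_applyMove (hoff : ∀ u w : V, u ≠ w → 0 ≤ M u w) (hsym : M.IsSymm)
    {K : V → ℤ} (hK : HasGoodPath M K) {v : V} (hv : K v + M v v = 0) :
    HasGoodPath M (applyMove M K v) := by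
  obtain ⟨l, hl, hend⟩ := hK
  induction l generalizing K with
  | nil =>
    have := (hend v).1
    simp only [pathEnd, List.foldl_nil] at this
    omega
  | cons u l ih =>
    obtain ⟨hu, hl⟩ := hl
    by_cases hvu : v = u
    · subst hvu
      exact ⟨l, hl, hend⟩
    rcases (hoff u v (Ne.symm hvu)).lt_or_eq with hpos | hzero
    · -- the move at the neighbour `u` makes `v` bad for the rest of the good path
      have hbad := hl.pathEnd_add_diag_pos hoff (w := v) (by simp only [applyMove]; omega)
      have := (hend v).1
      simp only [pathEnd_cons] at this
      omega
    · have hcomm : applyMove M (applyMove M K v) u = applyMove M (applyMove M K u) v := by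
        funext i
        simp only [applyMove]
        ring
      obtain ⟨l', hl', hend'⟩ := ih (by simp only [applyMove]; omega) hl hend
      refine ⟨u :: l', ⟨?_, hcomm ▸ hl'⟩, ?_⟩
      · simp only [applyMove]
        rw [hsym.apply]
        omega
      · rwa [pathEnd_cons, hcomm]

lemma hasGoodPath_pathEnd (hoff : ∀ u w : V, u ≠ w → 0 ≤ M u w) (hsym : M.IsSymm)
    {K : V → ℤ} (hK : HasGoodPath M K) {l : List V} (hl : PathLegal M K l) :
    HasGoodPath M (pathEnd M K l) := by
  induction l generalizing K with
  | nil => exact hK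
  | cons v l ih => exact ih (hasGoodPath_applyMove hoff hsym hK hl.1) hl.2

lemma BadFullPath.not_hasGoodPath (hoff : ∀ u w : V, u ≠ w → 0 ≤ M u w) (hsym : M.IsSymm)
    {K : V → ℤ} {l : List V} (hbad : BadFullPath M K l) : ¬HasGoodPath M K := by
  intro hgood
  obtain ⟨hl, w, hw⟩ := hbad
  obtain ⟨l', hl', hend⟩ := hasGoodPath_pathEnd hoff hsym hgood hl
  have := hl'.pathEnd_add_diag_pos hoff hw
  have := (hend w).1
  dsimp only at this
  omega

end Paths

section Restriction

variable {W V : Type*} {M : Matrix V V ℤ} {M' : Matrix W W ℤ} {e : W → V}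
  {K : V → ℤ} {K' : W → ℤ}

lemma pathEnd_map_apply (hM : ∀ a b, M (e a) (e b) = M' a b) (hK : ∀ a, K (e a) = K' a)
    (l : List W) (a : W) : pathEnd M K (l.map e) (e a) = pathEnd M' K' l a := by
  induction l generalizing K K' with
  | nil => exact hK a
  | cons v l ih => exact ih (fun b => by simp only [applyMove, hK, hM])

lemma PathLegal.map (hM : ∀ a b, M (e a) (e b) = M' a b) (hK : ∀ a, K (e a) = K' a)
    {l : List W} (hl : PathLegal M' K' l) : PathLegal M K (l.map e) := by
  induction l generalizing K K' with
  | nil => trivial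
  | cons v l ih =>
    exact ⟨by rw [hK, hM]; exact hl.1, ih (fun b => by simp only [applyMove, hK, hM]) hl.2⟩

lemma BadFullPath.map (hM : ∀ a b, M (e a) (e b) = M' a b) (hK : ∀ a, K (e a) = K' a)
    {l : List W} (h : BadFullPath M' K' l) : BadFullPath M K (l.map e) := by
  obtain ⟨hl, a, ha⟩ := h
  exact ⟨hl.map hM hK, e a, by rwa [pathEnd_map_apply hM hK, hM]⟩

end Restriction

lemma MG_apply (n : ℕ) (i j : Fin (n + 3)) :
    MG n i j = if i.val = j.val then wt i.val else if adjG i.val j.val then 1 else 0 := by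
  simp only [MG, Fin.ext_iff]

lemma MG_nonneg_of_ne (n : ℕ) (i j : Fin (n + 3)) (h : i ≠ j) : 0 ≤ MG n i j := by
  rw [MG, if_neg h]
  split <;> norm_num

lemma MG_isSymm (n : ℕ) : (MG n).IsSymm := by
  refine Matrix.IsSymm.ext fun i j => ?_
  simp only [MG_apply, adjG]
  split_ifs <;> first | omega | simp_all

lemma MG_castLE {m n : ℕ} (h : m ≤ n) (a b : Fin (m + 3)) :
    MG n (Fin.castLE (by omega) a) (Fin.castLE (by omega) b) = MG m a b := by
  simp only [MG_apply, Fin.val_castLE]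

lemma MG_tail_diag {n : ℕ} {i : Fin (n + 3)} (hi : 4 ≤ i.val) : MG n i i = -2 := by
  rw [MG_apply, if_pos rfl, wt]
  simp only [show i.val ≠ 0 by omega, show i.val ≠ 1 by omega, show i.val ≠ 2 by omega,
    show i.val ≠ 3 by omega, if_false]

lemma MG_chain_pred {n : ℕ} {i j : Fin (n + 3)} (hi : 4 ≤ i.val) (hij : j.val + 1 = i.val) :
    MG n i j = 1 := by
  rw [MG_apply, if_neg (by omega), if_pos (by simp only [adjG]; omega)]

lemma MG_chain_of_lt_pred {n : ℕ} {i j : Fin (n + 3)} (hi : 4 ≤ i.val)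
    (hij : j.val + 1 < i.val) : MG n i j = 0 := by
  rw [MG_apply, if_neg (by omega), if_neg (by simp only [adjG]; omega)]

-- The paper's vertex sequence 1,2,1,3,1,2,1,5,4,1,2,1 in 0-indexing; it ends with pairing 5 on the
-- vertex of weight -3.
lemma badFullPath_MG_two :
    BadFullPath (MG 2) ![1, 0, -1, -3, 2] [0, 1, 0, 2, 0, 1, 0, 4, 3, 0, 1, 0] :=
  ⟨by decide, 2, by decide⟩

lemma tail_eq_zero_or_two {n : ℕ} {K : Fin (n + 3) → ℤ}
    (hchar : ∀ i, (2 : ℤ) ∣ (K i - MG n i i)) (hb : InBounds (MG n) K)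
    {i : Fin (n + 3)} (hi : 4 ≤ i.val) : K i = 0 ∨ K i = 2 := by
  have hbi := hb i
  have hci := hchar i
  rw [MG_tail_diag hi] at hbi hci
  omega

/-- Moving at `j, j - 1, …, 5` in turn carries the pairing `2` down the chain to vertex `4`. -/
lemma exists_pathLegal_two_at_four {n : ℕ} {K : Fin (n + 3) → ℤ} {j : Fin (n + 3)}
    (hj : 4 ≤ j.val) (hKj : K j = 2)
    (hzero : ∀ m : Fin (n + 3), 4 ≤ m.val → m < j → K m = 0) :
    ∃ l, PathLegal (MG n) K l ∧
      (∀ m : Fin (n + 3), m.val < 4 → pathEnd (MG n) K l m = K m) ∧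
      ∀ m : Fin (n + 3), m.val = 4 → pathEnd (MG n) K l m = 2 := by
  obtain ⟨k, hk⟩ := Nat.exists_eq_add_of_le hj
  induction k generalizing K j with
  | zero =>
    refine ⟨[], trivial, fun m _ => rfl, fun m hm => ?_⟩
    rw [show m = j from Fin.ext (by omega)]
    exact hKj
  | succ k ih =>
    obtain ⟨j', hj'⟩ : ∃ j' : Fin (n + 3), j'.val = 4 + k := ⟨⟨4 + k, by omega⟩, rfl⟩
    have hmove : ∀ m : Fin (n + 3), m.val < 4 + k → applyMove (MG n) K j m = K m := by
      intro m hm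
      rw [applyMove, MG_chain_of_lt_pred hj (by omega), mul_zero, add_zero]
    have hKj' : applyMove (MG n) K j j' = 2 := by
      rw [applyMove, MG_chain_pred hj (by omega), hzero j' (by omega) (Fin.lt_def.2 (by omega))]
      rfl
    obtain ⟨l, hl, hfix, hfour⟩ := ih (by omega) hKj'
      (fun m hm4 hmj => by
        rw [Fin.lt_def] at hmj
        rw [hmove m (by omega)]
        exact hzero m hm4 (Fin.lt_def.2 (by omega)))
      hj'
    refine ⟨j :: l, ⟨by rw [hKj, MG_tail_diag hj]; rfl, hl⟩, fun m hm => ?_, hfour⟩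
    rw [pathEnd_cons, hfix m hm, hmove m (by omega)]

lemma exists_badFullPath_of_tail_ne_zero {n : ℕ} (hn : 2 ≤ n) {K : Fin (n + 3) → ℤ}
    (hchar : ∀ i, (2 : ℤ) ∣ (K i - MG n i i)) (hb : InBounds (MG n) K)
    (hprefix : ∀ a : Fin 4, K (Fin.castLE (by omega) a) = ![1, 0, -1, -3] a)
    {i : Fin (n + 3)} (hi : 4 ≤ i.val) (hKi : K i ≠ 0) : ∃ l, BadFullPath (MG n) K l := by
  obtain ⟨j, ⟨hj, hKj⟩, hmin⟩ :=
    wellFounded_lt.has_min {m : Fin (n + 3) | 4 ≤ m.val ∧ K m ≠ 0} ⟨i, hi, hKi⟩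
  obtain ⟨l, hl, hfix, hfour⟩ := exists_pathLegal_two_at_four hj
    ((tail_eq_zero_or_two hchar hb hj).resolve_left hKj)
    (fun m hm hmj => by_contra fun hKm => hmin m ⟨hm, hKm⟩ hmj)
  have hG2 : ∀ a : Fin 5,
      pathEnd (MG n) K l (Fin.castLE (by omega) a) = ![1, 0, -1, -3, 2] a := by
    intro a
    fin_cases a
    exacts [(hfix _ (by simp)).trans (hprefix 0), (hfix _ (by simp)).trans (hprefix 1),
      (hfix _ (by simp)).trans (hprefix 2), (hfix _ (by simp)).trans (hprefix 3),
      hfour _ (by simp)]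
  exact ⟨_, hl.badFullPath_append (badFullPath_MG_two.map (MG_castLE hn) hG2)⟩

/-- on `G_n` (`n ≥ 2`), every characteristic vector `K` satisfying the
inequalities, with first four pairings `(1, 0, -1, -3)` and some nonzero pairing among
positions `5,…,n+3`, admits a bad full path; hence the only basic vector with this
initial segment is `K_2 = (1,0,-1,-3,0,…,0)`. -/
theorem only_basic_with_minus3 (n : ℕ) (hn : 2 ≤ n) (K : Fin (n + 3) → ℤ)
    (hchar : ∀ i, (2 : ℤ) ∣ (K i - MG n i i)) (hb : InBounds (MG n) K)
    (h0 : K ⟨0, by omega⟩ = 1) (h1 : K ⟨1, by omega⟩ = 0)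
    (h2 : K ⟨2, by omega⟩ = -1) (h3 : K ⟨3, by omega⟩ = -3) :
    ((∃ i : Fin (n + 3), 4 ≤ i.val ∧ K i ≠ 0) → ∃ l, BadFullPath (MG n) K l) ∧
      (HasGoodPath (MG n) K → K = Kv n 2) := by
  have hprefix : ∀ a : Fin 4, K (Fin.castLE (by omega) a) = ![1, 0, -1, -3] a := by
    intro a
    fin_cases a
    exacts [h0, h1, h2, h3]
  have hbad : ∀ i : Fin (n + 3), 4 ≤ i.val → K i ≠ 0 → ∃ l, BadFullPath (MG n) K l :=
    fun i hi hKi => exists_badFullPath_of_tail_ne_zero hn hchar hb hprefix hi hKi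
  refine ⟨fun ⟨i, hi, hKi⟩ => hbad i hi hKi, fun hgood => funext fun i => ?_⟩
  rcases i with ⟨_ | _ | _ | _ | m, hm⟩
  · exact h0
  · exact h1
  · exact h2
  · exact h3
  · by_contra hne
    obtain ⟨l, hl⟩ := hbad _ (by simp) hne
    exact hl.not_hasGoodPath (MG_nonneg_of_ne n) (MG_isSymm n) hgood
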